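/- For every positive integer n, the size of the Varshamov–Tenengolts code VT_0(n) is at least 2^n/(n+1). -/

import Mathlib

open Finset

/-- The Varshamov--Tenengolts code `VT_b(n)`. -/
def VT (n b : ℕ) : Finset (Fin n → Fin 2) :=
  Finset.univ.filter fun s => (∑ i : Fin n, (i.val + 1) * (s i).val) % (n + 1) = b

open Complex in
noncomputable def vtω (n : ℕ) : ℂ := Complex.exp (2 * Real.pi * Complex.I / (n+1))

open Complex in
lemma vtω_prim (n : ℕ) : IsPrimitiveRoot (vtω n) (n+1) := by
  have := Complex.isPrimitiveRoot_exp (n+1) (by omega)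
  simpa [vtω] using this

open Complex in
lemma vtω_pow (n : ℕ) : (vtω n) ^ (n+1) = 1 := (vtω_prim n).pow_eq_one

open Complex in
lemma vtω_abs (n : ℕ) : ‖vtω n‖ = 1 := by
  have hz : (2 * (Real.pi:ℂ) * Complex.I / ((n:ℂ)+1)) = ((2*Real.pi/(n+1) : ℝ):ℂ) * Complex.I := by
    push_cast; ring
  rw [vtω]
  push_cast
  rw [hz, Complex.norm_exp]
  simp only [Complex.mul_re, Complex.ofReal_re, Complex.ofReal_im, Complex.I_re, Complex.I_im]
  norm_num

open Complex in
lemma vtω_conj_pow (n k j : ℕ) (hj : j ∈ Icc 1 n) :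
    (starRingEnd ℂ) (1 + (vtω n)^(k*j)) = 1 + (vtω n)^(k*(n+1-j)) := by
  simp only [map_add, map_one]
  congr 1
  have hj' : j ≤ n := (mem_Icc.mp hj).2
  have habs : ‖(vtω n)^(k*j)‖ = 1 := by
    rw [norm_pow, vtω_abs, one_pow]
  have hinv : ((vtω n)^(k*j))⁻¹ = (starRingEnd ℂ) ((vtω n)^(k*j)) :=
    Complex.inv_eq_conj habs
  rw [← hinv]
  have hmul : (vtω n)^(k*(n+1-j)) * (vtω n)^(k*j) = 1 := by
    rw [← pow_add, ← Nat.mul_add]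
    have : n + 1 - j + j = n + 1 := by omega
    rw [this, mul_comm k (n+1), pow_mul, vtω_pow, one_pow]
  exact (eq_inv_of_mul_eq_one_left hmul).symm

open Complex in
lemma vt_prod_real (n k : ℕ) :
    ∃ r : ℝ, 0 ≤ r ∧ ∏ j ∈ Icc 1 n, (1 + (vtω n)^(k*j)) = (r:ℂ) := by
  set ω := vtω n with hωdef
  set m := n/2 with hm
  have hsplit : Icc 1 n = Ioc 0 m ∪ Ioc m n := by
    rw [Finset.Ioc_union_Ioc_eq_Ioc (Nat.zero_le m) (by omega), ← Finset.Icc_add_one_left_eq_Ioc 0 n, zero_add]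
  have hdisj : Disjoint (Ioc (0:ℕ) m) (Ioc m n) := by
    simp only [Finset.disjoint_left, mem_Ioc]
    intro a ha hb
    omega
  set A := ∏ j ∈ Ioc 0 m, (1 + ω^(k*j)) with hA
  have hconjA : (starRingEnd ℂ) A = ∏ j ∈ Ioc 0 m, (1 + ω^(k*(n+1-j))) := by
    rw [hA, map_prod]
    refine Finset.prod_congr rfl fun j hj => ?_
    exact vtω_conj_pow n k j (by simp only [mem_Ioc] at hj; simp only [mem_Icc]; omega)
  rw [hsplit, Finset.prod_union hdisj, ← hA]
  rcases Nat.even_or_odd n with ⟨mm, hmm⟩ | ⟨mm, hmm⟩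
  · -- n = 2m even
    have hmn : n = m + m := by omega
    have hB : ∏ j ∈ Ioc m n, (1 + ω^(k*j)) = (starRingEnd ℂ) A := by
      rw [hconjA]
      refine Finset.prod_nbij' (fun j => n+1-j) (fun j => n+1-j) ?_ ?_ ?_ ?_ ?_
      · intro a ha; simp only [mem_Ioc] at ha; simp only [mem_Ioc]; omega
      · intro a ha; simp only [mem_Ioc] at ha; simp only [mem_Ioc]; omega
      · intro a ha; simp only [mem_Ioc] at ha; omega
      · intro a ha; simp only [mem_Ioc] at ha; omega
      · intro a ha
        simp only [mem_Ioc] at ha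
        have h2 : n + 1 - (n + 1 - a) = a := by omega
        rw [h2]
    rw [hB, Complex.mul_conj]
    exact ⟨Complex.normSq A, Complex.normSq_nonneg A, rfl⟩
  · -- n = 2m+1 odd
    have hmn : n = m + m + 1 := by omega
    have hins : Ioc m n = insert (m+1) (Ioc (m+1) n) := by
      rw [Finset.Ioc_insert_left (by omega : m + 1 ≤ n), Finset.Icc_add_one_left_eq_Ioc]
    have hnotmem : m + 1 ∉ Ioc (m+1) n := by simp
    have hB : ∏ j ∈ Ioc (m+1) n, (1 + ω^(k*j)) = (starRingEnd ℂ) A := by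
      rw [hconjA]
      refine Finset.prod_nbij' (fun j => n+1-j) (fun j => n+1-j) ?_ ?_ ?_ ?_ ?_
      · intro a ha; simp only [mem_Ioc] at ha; simp only [mem_Ioc]; omega
      · intro a ha; simp only [mem_Ioc] at ha; simp only [mem_Ioc]; omega
      · intro a ha; simp only [mem_Ioc] at ha; omega
      · intro a ha; simp only [mem_Ioc] at ha; omega
      · intro a ha
        simp only [mem_Ioc] at ha
        have h2 : n + 1 - (n + 1 - a) = a := by omega
        rw [h2]
    rw [hins, Finset.prod_insert hnotmem, hB]
    -- goal : A * ((1 + ω^(k*(m+1))) * conj A) = r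
    set ε := ω^(m+1) with hε
    have hε2 : ε * ε = 1 := by
      rw [hε, ← pow_add]
      have h3 : m + 1 + (m + 1) = n + 1 := by omega
      rw [h3]
      exact vtω_pow n
    have hεcases : ε = 1 ∨ ε = -1 := mul_self_eq_one_iff.mp hε2
    have hpow : ω^(k*(m+1)) = ε^k := by
      rw [hε, ← pow_mul, mul_comm]
    have hfac : ∃ c : ℝ, 0 ≤ c ∧ (1 + ω^(k*(m+1))) = (c:ℂ) := by
      rw [hpow]
      rcases hεcases with h | h
      · exact ⟨2, by norm_num, by rw [h, one_pow]; norm_num⟩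
      · rcases Nat.even_or_odd k with hk | hk
        · refine ⟨2, by norm_num, ?_⟩
          rw [h, hk.neg_one_pow]; norm_num
        · refine ⟨0, le_refl 0, ?_⟩
          rw [h, hk.neg_one_pow]; norm_num
    obtain ⟨c, hc0, hc⟩ := hfac
    refine ⟨c * Complex.normSq A, mul_nonneg hc0 (Complex.normSq_nonneg A), ?_⟩
    rw [hc]
    rw [mul_comm A, mul_assoc, mul_comm ((starRingEnd ℂ) A) A, Complex.mul_conj]
    push_cast
    ring

open Complex in
lemma vt_char_sum (n : ℕ) :
    ((n:ℂ)+1) * ((Finset.univ.filter fun s : Fin n → Fin 2 =>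
        (∑ i : Fin n, (i.val + 1) * (s i).val) % (n + 1) = 0).card : ℂ) =
      ∑ k ∈ Finset.range (n+1), ∏ j ∈ Icc 1 n, (1 + (vtω n)^(k*j)) := by
  set ω := vtω n with hωdef
  have hstep1 : ∀ k, ∏ j ∈ Icc 1 n, (1 + ω^(k*j)) =
      ∑ s : Fin n → Fin 2, ω ^ (k * ∑ i : Fin n, (i.val + 1) * (s i).val) := by
    intro k
    have h1 : ∏ j ∈ Icc 1 n, (1 + ω^(k*j)) = ∏ i : Fin n, (1 + ω^(k*(i.val+1))) := by
      rw [← Finset.Ico_add_one_right_eq_Icc, Finset.prod_Ico_eq_prod_range]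
      rw [Fin.prod_univ_eq_prod_range (fun i => (1 + ω^(k*(i+1))))]
      simp [add_comm]
    have h2 : ∀ i : Fin n, (1 + ω^(k*(i.val+1))) =
        ∑ t : Fin 2, ω^(k*(i.val+1)*t.val) := by
      intro i
      rw [Fin.sum_univ_two]
      simp
    rw [h1]
    simp only [h2]
    rw [Finset.prod_univ_sum]
    rw [Fintype.piFinset_univ]
    refine Finset.sum_congr rfl fun s _ => ?_
    rw [Finset.prod_pow_eq_pow_sum]
    congr 1
    rw [Finset.mul_sum]
    exact Finset.sum_congr rfl fun i _ => by ring
  have hgeom : ∀ s : Fin n → Fin 2,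
      (∑ k ∈ Finset.range (n+1), ω ^ (k * ∑ i : Fin n, (i.val + 1) * (s i).val)) =
      if (∑ i : Fin n, (i.val + 1) * (s i).val) % (n + 1) = 0 then ((n:ℂ)+1) else 0 := by
    intro s
    set S := ∑ i : Fin n, (i.val + 1) * (s i).val with hS
    have hrw : ∀ k, ω ^ (k * S) = (ω ^ S) ^ k := fun k => by
      rw [← pow_mul, mul_comm]
    simp only [hrw]
    by_cases hdvd : S % (n+1) = 0
    · have : ω ^ S = 1 := by
        obtain ⟨c, hc⟩ := Nat.dvd_of_mod_eq_zero hdvd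
        rw [hc, pow_mul, vtω_pow, one_pow]
      simp [this, hdvd]
    · have hne : ω ^ S ≠ 1 := by
        intro h
        have hd : (n+1) ∣ S := ((vtω_prim n).pow_eq_one_iff_dvd S).mp h
        exact hdvd (Nat.mod_eq_zero_of_dvd hd)
      rw [geom_sum_eq hne]
      have hx : (ω ^ S) ^ (n+1) = 1 := by
        rw [← pow_mul, mul_comm, pow_mul, vtω_pow, one_pow]
      rw [hx]
      simp [hdvd]
  rw [Finset.sum_congr rfl (fun k _ => hstep1 k), Finset.sum_comm]
  rw [Finset.sum_congr rfl (fun s _ => hgeom s)]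
  rw [Finset.sum_ite, Finset.sum_const, Finset.sum_const_zero, add_zero, nsmul_eq_mul]
  ring

theorem stmt_17 (n : ℕ) (hn : 1 ≤ n) :
    ((VT n 0).card : ℝ) ≥ 2 ^ n / (n + 1) := by
  have hchar := vt_char_sum n
  have hVT : (VT n 0).card = (Finset.univ.filter fun s : Fin n → Fin 2 =>
      (∑ i : Fin n, (i.val + 1) * (s i).val) % (n + 1) = 0).card := rfl
  have hcast : ((n:ℂ)+1) * (((VT n 0).card : ℕ) : ℂ) =
      (((((n:ℝ)+1) * ((VT n 0).card : ℝ)) : ℝ) : ℂ) := by push_cast; ring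
  rw [← hVT, hcast] at hchar
  have hre : ((n:ℝ)+1) * ((VT n 0).card : ℝ) =
      ∑ k ∈ Finset.range (n+1), (∏ j ∈ Icc 1 n, (1 + (vtω n)^(k*j))).re := by
    have := congrArg Complex.re hchar
    rwa [Complex.ofReal_re, Complex.re_sum] at this
  have hnonneg : ∀ k ∈ Finset.range (n+1),
      0 ≤ (∏ j ∈ Icc 1 n, (1 + (vtω n)^(k*j))).re := by
    intro k _
    obtain ⟨r, hr0, hr⟩ := vt_prod_real n k
    rw [hr, Complex.ofReal_re]
    exact hr0
  have h0 : (∏ j ∈ Icc 1 n, (1 + (vtω n)^(0*j))).re = 2^n := by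
    have : (∏ j ∈ Icc 1 n, (1 + (vtω n)^(0*j))) = (2:ℂ)^n := by
      have : ∀ j ∈ Icc 1 n, (1 + (vtω n)^(0*j)) = 2 := by
        intro j _
        rw [Nat.zero_mul, pow_zero]
        norm_num
      rw [Finset.prod_congr rfl this, Finset.prod_const, Nat.card_Icc]
      norm_num
    rw [this]
    have : ((2:ℂ)^n) = (((2:ℝ)^n : ℝ) : ℂ) := by push_cast; ring
    rw [this, Complex.ofReal_re]
  have hge : (2:ℝ)^n ≤ ((n:ℝ)+1) * ((VT n 0).card : ℝ) := by
    rw [hre]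
    calc (2:ℝ)^n = (∏ j ∈ Icc 1 n, (1 + (vtω n)^(0*j))).re := h0.symm
    _ ≤ ∑ k ∈ Finset.range (n+1), (∏ j ∈ Icc 1 n, (1 + (vtω n)^(k*j))).re :=
      Finset.single_le_sum hnonneg (by simp)
  have hpos : (0:ℝ) < (n:ℝ) + 1 := by positivity
  rw [ge_iff_le, div_le_iff₀ hpos]
  linarith
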